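/- Let F be a field, α ∈ F^×, and x, y ∈ F^× with β := x² − α y² ≠ 0. Then there exist elements a₁, b₁, a₂, b₂ ∈ F^× and a class τ ∈ K₂F such that {α, β} = 2·({a₁, b₁} + {a₂, b₂}) + 4·τ in K₂F. (Explicitly one may take {a₁,b₁} = {α, y}, {a₂,b₂} = {x/y, −α⁻¹((x/y)² − α)}, and τ = {x/y, −α}.) -/

import Mathlib

open TensorProduct

/-- The Steinberg submodule of `Fˣ ⊗ Fˣ`: spanned by `a ⊗ (1 - a)` for `a ≠ 1`. -/
def steinberg (F : Type*) [Field F] :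
    Submodule ℤ (Additive Fˣ ⊗[ℤ] Additive Fˣ) :=
  Submodule.span ℤ
    { z | ∃ (a : Fˣ) (h : (a : F) ≠ 1),
        z = Additive.ofMul a ⊗ₜ[ℤ]
            Additive.ofMul (Units.mk0 (1 - (a : F)) (sub_ne_zero.mpr h.symm)) }

/-- The Milnor K-group `K₂ F`. -/
def K2 (F : Type*) [Field F] :=
  (Additive Fˣ ⊗[ℤ] Additive Fˣ) ⧸ steinberg F

noncomputable instance (F : Type*) [Field F] : AddCommGroup (K2 F) :=
  inferInstanceAs (AddCommGroup ((Additive Fˣ ⊗[ℤ] Additive Fˣ) ⧸ steinberg F))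

/-- The symbol `{a, b}` in `K₂ F`. -/
noncomputable def symbol {F : Type*} [Field F] (a b : Fˣ) : K2 F :=
  Submodule.Quotient.mk (Additive.ofMul a ⊗ₜ[ℤ] Additive.ofMul b)

/-!
With `c = x / y` we have `β = y² (c² - α)`, so `{α, β} = 2 {α, y} + {α, c² - α}`. The
Steinberg relation for `c² / α`, whose complement is `δ = -α⁻¹ (c² - α)`, gives
`{c², δ} = {α, δ}`, and `{α, δ} = {α, c² - α}` because `{α, -α⁻¹} = 0`. Hence
`{α, β} = 2 ({α, y} + {c, δ})`: the decomposition holds with `τ = 0`.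
-/

namespace K2

variable {F : Type*} [Field F]

theorem symbol_mul_left (a b c : Fˣ) : symbol (a * b) c = symbol a c + symbol b c := by
  simp only [symbol, ofMul_mul, add_tmul, Submodule.Quotient.mk_add]
  rfl

theorem symbol_mul_right (a b c : Fˣ) : symbol a (b * c) = symbol a b + symbol a c := by
  simp only [symbol, ofMul_mul, tmul_add, Submodule.Quotient.mk_add]
  rfl

theorem symbol_inv_right (a b : Fˣ) : symbol a b⁻¹ = -symbol a b := by
  simp only [symbol, ofMul_inv, tmul_neg, Submodule.Quotient.mk_neg]
  rfl

theorem symbol_inv_left (a b : Fˣ) : symbol a⁻¹ b = -symbol a b := by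
  simp only [symbol, ofMul_inv, neg_tmul, Submodule.Quotient.mk_neg]
  rfl

theorem symbol_one_left (b : Fˣ) : symbol 1 b = 0 := by
  simp only [symbol, ofMul_one, zero_tmul, Submodule.Quotient.mk_zero]
  rfl

theorem symbol_one_right (a : Fˣ) : symbol a 1 = 0 := by
  simp only [symbol, ofMul_one, tmul_zero, Submodule.Quotient.mk_zero]
  rfl

theorem symbol_pow_left (a b : Fˣ) (n : ℕ) : symbol (a ^ n) b = n • symbol a b := by
  induction n with
  | zero => rw [pow_zero, zero_smul, symbol_one_left]
  | succ n ih => rw [pow_succ, symbol_mul_left, ih, succ_nsmul]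

theorem symbol_pow_right (a b : Fˣ) (n : ℕ) : symbol a (b ^ n) = n • symbol a b := by
  induction n with
  | zero => rw [pow_zero, zero_smul, symbol_one_right]
  | succ n ih => rw [pow_succ, symbol_mul_right, ih, succ_nsmul]

theorem symbol_eq_zero_of_add_eq_one {a b : Fˣ} (h : (a : F) + b = 1) : symbol a b = 0 := by
  have ha : (a : F) ≠ 1 := fun ha => b.ne_zero (by linear_combination h - ha)
  refine (Submodule.Quotient.mk_eq_zero _).mpr (Submodule.subset_span ⟨a, ha, ?_⟩)
  congr
  ext
  simp only [Units.val_mk0]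
  linear_combination h

theorem symbol_neg_self (a : Fˣ) : symbol a (-a) = 0 := by
  obtain rfl | ha := eq_or_ne a 1
  · exact symbol_one_left _
  have ha' : (a : F) ≠ 1 := Units.val_eq_one.not.mpr ha
  have h1 : (1 : F) - a ≠ 0 := sub_ne_zero.mpr ha'.symm
  have h2 : (1 : F) - (a : F)⁻¹ ≠ 0 := sub_ne_zero.mpr (inv_ne_one.mpr ha').symm
  -- `-a = (1 - a) / (1 - a⁻¹)`
  have hsplit : -a = Units.mk0 _ h1 * (Units.mk0 _ h2)⁻¹ := by
    have h0 : (a : F) ≠ 0 := a.ne_zero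
    ext
    simp only [Units.val_neg, Units.val_mul, Units.val_inv_eq_inv_val, Units.val_mk0]
    field_simp
    ring
  rw [hsplit, symbol_mul_right, symbol_inv_right, symbol_eq_zero_of_add_eq_one (by simp),
    ← neg_neg (symbol a _), ← symbol_inv_left, symbol_eq_zero_of_add_eq_one (by simp)]
  simp

theorem symbol_neg_inv_self (a : Fˣ) : symbol a (-a⁻¹) = 0 := by
  rw [← inv_neg, symbol_inv_right, symbol_neg_self, neg_zero]

theorem symbol_eq_two_nsmul_of_val_eq_sq_sub {α c γ : Fˣ} (hγ : (γ : F) = c ^ 2 - α) :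
    symbol α γ = 2 • symbol c (-α⁻¹ * γ) := by
  have hsum : ((c ^ 2 * α⁻¹ : Fˣ) : F) + ((-α⁻¹ * γ : Fˣ) : F) = 1 := by
    have := α.ne_zero
    simp only [Units.val_neg, Units.val_mul, Units.val_pow_eq_pow_val, Units.val_inv_eq_inv_val,
      hγ]
    field_simp
    ring
  have hst := symbol_eq_zero_of_add_eq_one hsum
  rw [symbol_mul_left, symbol_inv_left, symbol_pow_left, symbol_mul_right α (-α⁻¹) γ,
    symbol_neg_inv_self, zero_add] at hst
  exact (add_neg_eq_zero.mp hst).symm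

end K2

open K2 in
/-- If `β = x² − α y² ≠ 0` with `x, y ∈ Fˣ`, then there are `a₁, b₁, a₂, b₂ ∈ Fˣ`
and `τ ∈ K₂ F` with `{α, β} = 2({a₁, b₁} + {a₂, b₂}) + 4 τ`. -/
theorem symbol_norm_decomposition (F : Type*) [Field F] (α x y : Fˣ)
    (hβ : (x : F) ^ 2 - (α : F) * (y : F) ^ 2 ≠ 0) :
    ∃ (a₁ b₁ a₂ b₂ : Fˣ) (τ : K2 F),
      symbol α (Units.mk0 ((x : F) ^ 2 - (α : F) * (y : F) ^ 2) hβ) =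
        2 • (symbol a₁ b₁ + symbol a₂ b₂) + 4 • τ := by
  set β := Units.mk0 _ hβ
  set c := x * y⁻¹
  set γ := β * (y ^ 2)⁻¹
  have hγ : (γ : F) = c ^ 2 - α := by
    have := y.ne_zero
    simp only [γ, β, c, Units.val_mul, Units.val_inv_eq_inv_val, Units.val_pow_eq_pow_val,
      Units.val_mk0]
    field_simp
  refine ⟨α, y, c, -α⁻¹ * γ, 0, ?_⟩
  calc symbol α β = symbol α (y ^ 2) + symbol α γ := by
        rw [← symbol_mul_right, mul_inv_cancel_comm_assoc]
    _ = 2 • (symbol α y + symbol c (-α⁻¹ * γ)) + 4 • 0 := by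
      rw [symbol_pow_right, symbol_eq_two_nsmul_of_val_eq_sq_sub hγ, smul_zero, add_zero, smul_add]
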